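/- The join K_3 * P_4 of a triangle with a path on four vertices is d_1-choosable. -/

import Mathlib

/-- The join of two graphs: disjoint union plus all edges in between. -/
def join {α β : Type*} (A : SimpleGraph α) (B : SimpleGraph β) :
    SimpleGraph (α ⊕ β) where
  Adj u v :=
    match u, v with
    | Sum.inl a, Sum.inl a' => A.Adj a a'
    | Sum.inr b, Sum.inr b' => B.Adj b b'
    | _, _ => True
  symm := by
    constructor
    rintro (a | a) (b | b) h
    · exact A.adj_symm h
    · trivial
    · trivial
    · exact B.adj_symm h
  loopless := by
    constructor
    rintro (a | a) h
    · exact A.irrefl h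
    · exact B.irrefl h

/-- Degree via the cardinality of the neighbor set. -/
noncomputable def deg {α : Type*} (G : SimpleGraph α) (v : α) : ℕ :=
  (G.neighborSet v).ncard

/-!
Colour the path first, with colour set `S`; the triangle then needs distinct colours from its
lists with `S` removed. These lists have at least five colours and `|S| ≤ 4`, so this succeeds as
soon as `S` meets a suitable set `W` of at most five colours in at most two of them: `W` is five
colours of the first triangle list if the other two lists have at least six colours together,
and the union of those two lists otherwise.

The path lists have sizes `deg + 2 = 3, 4, 4, 3`. If the vertices `0, 2` share a colour `a`,
colour both with `a`; the vertices `1, 3` are then coloured independently, either with a common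
colour or, since `L 1 ∩ L 3 ⊆ {a}` leaves `L 1 ∪ L 3` with six colours, so that one of the three
colours used lies outside `W`. The case of the vertices `1, 3` is symmetric. Otherwise `L 0, L 2` are disjoint and so are `L 1, L 3`, so each
of these pairs has two colours outside `W`; two path vertices can then be coloured outside `W`,
and the rest of the path greedily.
-/

open Finset SimpleGraph

def IsListColoring {V : Type*} (G : SimpleGraph V) (L : V → Finset ℕ) (c : V → ℕ) : Prop :=
  (∀ v, c v ∈ L v) ∧ ∀ u v, G.Adj u v → c u ≠ c v

section Degree

variable {α β : Type*}

theorem neighborSet_join_inl (A : SimpleGraph α) (B : SimpleGraph β) (a : α) :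
    (join A B).neighborSet (Sum.inl a) = Sum.inl '' A.neighborSet a ∪ Set.range Sum.inr := by
  ext (x | x) <;> simp [join]

theorem neighborSet_join_inr (A : SimpleGraph α) (B : SimpleGraph β) (b : β) :
    (join A B).neighborSet (Sum.inr b) = Set.range Sum.inl ∪ Sum.inr '' B.neighborSet b := by
  ext (x | x) <;> simp [join]

theorem deg_join_inl [Finite α] [Finite β] (A : SimpleGraph α) (B : SimpleGraph β) (a : α) :
    deg (join A B) (Sum.inl a) = deg A a + Nat.card β := by
  rw [deg, neighborSet_join_inl, Set.ncard_union_eq,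
    Set.ncard_image_of_injective _ Sum.inl_injective,
    Set.ncard_range_of_injective Sum.inr_injective, deg]
  exact Set.disjoint_left.mpr (by rintro _ ⟨x, -, rfl⟩ ⟨y, hy⟩; cases hy)

theorem deg_join_inr [Finite α] [Finite β] (A : SimpleGraph α) (B : SimpleGraph β) (b : β) :
    deg (join A B) (Sum.inr b) = Nat.card α + deg B b := by
  rw [deg, neighborSet_join_inr, Set.ncard_union_eq,
    Set.ncard_image_of_injective _ Sum.inr_injective,
    Set.ncard_range_of_injective Sum.inl_injective, deg]
  exact Set.disjoint_left.mpr (by rintro _ ⟨x, rfl⟩ ⟨y, -, hy⟩; cases hy)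

theorem deg_top [Finite α] (a : α) : deg (⊤ : SimpleGraph α) a = Nat.card α - 1 := by
  rw [deg, neighborSet_top, Set.ncard_compl, Set.ncard_singleton]

theorem deg_pathGraph_four (i : Fin 4) : deg (pathGraph 4) i = ![1, 2, 2, 1] i := by
  have : (pathGraph 4).neighborSet i =
      ↑(univ.filter fun j : Fin 4 => i.val + 1 = j.val ∨ j.val + 1 = i.val) := by
    ext j
    simp [pathGraph_adj]
  rw [deg, this, Set.ncard_coe_finset]
  fin_cases i <;> decide

end Degree

section Greedy

variable {V : Type*} [Fintype V] {G : SimpleGraph V} {L : V → Finset ℕ}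

theorem exists_isListColoring_extend (hL : ∀ v, deg G v < #(L v)) (s : Finset V) (c : V → ℕ)
    (hcL : ∀ v ∈ s, c v ∈ L v) (hc : ∀ u ∈ s, ∀ v ∈ s, G.Adj u v → c u ≠ c v) :
    ∃ c', IsListColoring G L c' ∧ ∀ v ∈ s, c' v = c v := by
  classical
  induction hn : #(univ \ s) generalizing s c with
  | zero =>
    obtain rfl : s = univ := by
      simpa [card_eq_zero, sdiff_eq_empty_iff_subset, univ_subset_iff] using hn
    exact ⟨c, ⟨fun v => hcL v (mem_univ v), fun u v => hc u (mem_univ u) v (mem_univ v)⟩,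
      fun _ _ => rfl⟩
  | succ n ih =>
    obtain ⟨v, hv⟩ : (univ \ s).Nonempty := card_pos.mp (by omega)
    have hvs : v ∉ s := (mem_sdiff.mp hv).2
    have hused : #((s.filter (G.Adj v)).image c) < #(L v) := calc
      _ ≤ #(s.filter (G.Adj v)) := card_image_le
      _ ≤ deg G v := by
        rw [deg, ← Set.ncard_coe_finset]
        exact Set.ncard_le_ncard fun w hw => (mem_filter.mp hw).2
      _ < _ := hL v
    obtain ⟨x, hxL, hxused⟩ := exists_mem_notMem_of_card_lt_card hused
    set c₁ := Function.update c v x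
    have hc₁v : c₁ v = x := Function.update_self ..
    have hc₁ : ∀ w ∈ s, c₁ w = c w := fun w hw =>
      Function.update_of_ne (by rintro rfl; exact hvs hw) _ _
    have hc₁L : ∀ w ∈ insert v s, c₁ w ∈ L w := by
      intro w hw
      rcases mem_insert.mp hw with rfl | hw
      · rwa [hc₁v]
      · rw [hc₁ w hw]
        exact hcL w hw
    have hc₁adj : ∀ u ∈ insert v s, ∀ w ∈ insert v s, G.Adj u w → c₁ u ≠ c₁ w := by
      intro u hu w hw huw
      rcases mem_insert.mp hu with rfl | hu <;> rcases mem_insert.mp hw with hwu | hw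
      · exact absurd (hwu ▸ huw) G.irrefl
      · rw [hc₁v, hc₁ w hw]
        exact fun h => hxused (mem_image.mpr ⟨w, mem_filter.mpr ⟨hw, huw⟩, h.symm⟩)
      · rw [hwu, hc₁v, hc₁ u hu]
        exact fun h => hxused (mem_image.mpr ⟨u, mem_filter.mpr ⟨hu, hwu ▸ huw.symm⟩, h⟩)
      · rw [hc₁ u hu, hc₁ w hw]
        exact hc u hu w hw huw
    have hn₁ : #(univ \ insert v s) = n := by
      rw [sdiff_insert, card_erase_of_mem hv, hn, Nat.add_sub_cancel]
    obtain ⟨c', hc', hc's⟩ := ih (insert v s) c₁ hc₁L hc₁adj hn₁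
    exact ⟨c', hc', fun w hw => (hc's w (mem_insert_of_mem hw)).trans (hc₁ w hw)⟩

theorem exists_isListColoring_pair (hL : ∀ v, deg G v < #(L v)) {i j : V} (hij : i ≠ j)
    {p q : ℕ} (hp : p ∈ L i) (hq : q ∈ L j) (hpq : p ≠ q) :
    ∃ c, IsListColoring G L c ∧ c i = p ∧ c j = q := by
  classical
  obtain ⟨c, hc, hcij⟩ :=
    exists_isListColoring_extend hL {i, j} (fun k => if k = i then p else q)
      (by simp [hp, hq, hij.symm]) (by simp [hij.symm, hpq, hpq.symm])
  exact ⟨c, hc, by simpa using hcij i (by simp), by simpa [hij.symm] using hcij j (by simp)⟩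

end Greedy

theorem Finset.exists_mem_mem_ne_of_two_le_card_union {α : Type*} [DecidableEq α]
    {P Q : Finset α} (hP : P.Nonempty) (hQ : Q.Nonempty) (h : 2 ≤ #(P ∪ Q)) :
    ∃ p ∈ P, ∃ q ∈ Q, p ≠ q := by
  by_contra! hPQ
  obtain ⟨p, hp⟩ := hP
  obtain ⟨q, hq⟩ := hQ
  have : P ∪ Q ⊆ {q} := by
    intro x hx
    rcases mem_union.mp hx with hx | hx
    · exact mem_singleton.mpr (hPQ x hx q hq)
    · exact mem_singleton.mpr ((hPQ p hp x hx).symm.trans (hPQ p hp q hq))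
  have := card_le_card this
  rw [card_singleton] at this
  omega

theorem Finset.nonempty_and_nonempty_or_two_le_card {α : Type*} [DecidableEq α]
    {P Q : Finset α} (h : 2 ≤ #(P ∪ Q)) : (P.Nonempty ∧ Q.Nonempty) ∨ 2 ≤ #P ∨ 2 ≤ #Q := by
  rcases P.eq_empty_or_nonempty with rfl | hP
  · simp_all
  rcases Q.eq_empty_or_nonempty with rfl | hQ
  · simp_all
  exact Or.inl ⟨hP, hQ⟩

theorem card_image_inter_le_of_notMem {ι : Type*} [Fintype ι] {c : ι → ℕ} {W : Finset ℕ}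
    {i j : ι} (hij : i ≠ j) (hi : c i ∉ W) (hj : c j ∉ W) :
    #(univ.image c ∩ W) ≤ Fintype.card ι - 2 := by
  classical
  calc #(univ.image c ∩ W) ≤ #(((univ.erase i).erase j).image c) := by
        refine card_le_card fun x hx => ?_
        obtain ⟨⟨k, -, rfl⟩, hkW⟩ := And.imp_left mem_image.mp (mem_inter.mp hx)
        refine mem_image_of_mem c (mem_erase.mpr ⟨?_, mem_erase.mpr ⟨?_, mem_univ k⟩⟩)
        · rintro rfl; exact hj hkW
        · rintro rfl; exact hi hkW
    _ ≤ #((univ.erase i).erase j) := card_image_le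
    _ = Fintype.card ι - 2 := by
      rw [card_erase_of_mem (mem_erase.mpr ⟨hij.symm, mem_univ j⟩),
        card_erase_of_mem (mem_univ i), card_univ, Nat.sub_sub]

section Path

variable {L : Fin 4 → Finset ℕ} {W : Finset ℕ}

theorem pathGraph_adj_rev {n : ℕ} {u v : Fin n} :
    (pathGraph n).Adj u.rev v.rev ↔ (pathGraph n).Adj u v := by
  simp only [pathGraph_adj, Fin.val_rev]
  omega

theorem IsListColoring.comp_rev {n : ℕ} {L : Fin n → Finset ℕ} {c : Fin n → ℕ}
    (h : IsListColoring (pathGraph n) (L ∘ Fin.rev) c) :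
    IsListColoring (pathGraph n) L (c ∘ Fin.rev) :=
  ⟨fun v => by simpa using h.1 v.rev, fun _ _ huv => h.2 _ _ (pathGraph_adj_rev.mpr huv)⟩

theorem isListColoring_pathGraph_four_iff {c : Fin 4 → ℕ} :
    IsListColoring (pathGraph 4) L c ↔
      (∀ i, c i ∈ L i) ∧ c 0 ≠ c 1 ∧ c 1 ≠ c 2 ∧ c 2 ≠ c 3 := by
  refine and_congr_right fun _ => ⟨fun h => ⟨h 0 1 ?_, h 1 2 ?_, h 2 3 ?_⟩, ?_⟩
  · simp [pathGraph_adj]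
  · simp [pathGraph_adj]
  · simp [pathGraph_adj]
  rintro ⟨h01, h12, h23⟩ u v huv
  rw [pathGraph_adj] at huv
  fin_cases u <;> fin_cases v <;> grind

theorem card_le_of_deg_pathGraph_four_add_two_le (hL : ∀ i, deg (pathGraph 4) i + 2 ≤ #(L i)) :
    3 ≤ #(L 0) ∧ 4 ≤ #(L 1) ∧ 4 ≤ #(L 2) ∧ 3 ≤ #(L 3) := by
  simpa [deg_pathGraph_four] using (⟨hL 0, hL 1, hL 2, hL 3⟩ : _ ∧ _ ∧ _ ∧ _)

theorem exists_isListColoring_pathGraph_four_of_mem_inter (hL1 : 4 ≤ #(L 1))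
    (hL3 : 3 ≤ #(L 3)) (hW : #W ≤ 5) {a : ℕ} (ha0 : a ∈ L 0) (ha2 : a ∈ L 2) :
    ∃ c, IsListColoring (pathGraph 4) L c ∧ #(univ.image c ∩ W) ≤ 2 := by
  suffices ∃ b ∈ (L 1).erase a, ∃ d ∈ (L 3).erase a, #({a, b, d} ∩ W) ≤ 2 by
    obtain ⟨b, hb, d, hd, hbd⟩ := this
    have himage : univ.image ![a, b, a, d] ⊆ {a, b, d} :=
      image_subset_iff.mpr fun i _ => by fin_cases i <;> simp
    refine ⟨![a, b, a, d], isListColoring_pathGraph_four_iff.mpr ⟨?_, ?_⟩,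
      (card_le_card (inter_subset_inter_right himage)).trans hbd⟩
    · intro i
      fin_cases i <;> simp [ha0, ha2, mem_of_mem_erase hb, mem_of_mem_erase hd]
    · simp [(ne_of_mem_erase hb).symm, ne_of_mem_erase hb, (ne_of_mem_erase hd).symm]
  have two_of_subset : ∀ {s : Finset ℕ} {x y : ℕ}, s ∩ W ⊆ {x, y} → #(s ∩ W) ≤ 2 :=
    fun h => (card_le_card h).trans card_le_two
  obtain ⟨b, hb⟩ : ((L 1).erase a).Nonempty := card_pos.mp (by grind [pred_card_le_card_erase])
  obtain ⟨d, hd⟩ : ((L 3).erase a).Nonempty := card_pos.mp (by grind [pred_card_le_card_erase])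
  by_cases hshared : ∃ e ∈ (L 1).erase a, e ∈ L 3
  · obtain ⟨e, he, he3⟩ := hshared
    refine ⟨e, he, e, mem_erase.mpr ⟨ne_of_mem_erase he, he3⟩, two_of_subset (x := a) (y := e) ?_⟩
    simp only [subset_iff, mem_inter, mem_insert, mem_singleton]
    tauto
  by_cases haW : a ∈ W
  · -- `L 1 ∩ L 3 ⊆ {a}`, so `L 1 ∪ L 3` is too large to fit in `W`
    have hinter : #(L 1 ∩ L 3) ≤ 1 := card_le_one.mpr fun x hx y hy => by
      simp only [mem_inter] at hx hy
      by_contra hxy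
      rcases eq_or_ne x a with rfl | hxa
      · exact hshared ⟨y, mem_erase.mpr ⟨Ne.symm hxy, hy.1⟩, hy.2⟩
      · exact hshared ⟨x, mem_erase.mpr ⟨hxa, hx.1⟩, hx.2⟩
    have := card_union_add_card_inter (L 1) (L 3)
    obtain ⟨w, hw, hwW⟩ :=
      exists_mem_notMem_of_card_lt_card (s := W) (t := L 1 ∪ L 3) (by omega)
    have hwa : w ≠ a := fun h => hwW (h ▸ haW)
    rcases mem_union.mp hw with hw | hw
    · refine ⟨w, mem_erase.mpr ⟨hwa, hw⟩, d, hd, two_of_subset (x := a) (y := d) ?_⟩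
      simp only [subset_iff, mem_inter, mem_insert, mem_singleton]
      grind
    · refine ⟨b, hb, w, mem_erase.mpr ⟨hwa, hw⟩, two_of_subset (x := a) (y := b) ?_⟩
      simp only [subset_iff, mem_inter, mem_insert, mem_singleton]
      grind
  · refine ⟨b, hb, d, hd, two_of_subset (x := b) (y := d) ?_⟩
    simp only [subset_iff, mem_inter, mem_insert, mem_singleton]
    grind

theorem exists_isListColoring_pathGraph_four_of_disjoint
    (hL : ∀ i, deg (pathGraph 4) i + 2 ≤ #(L i)) (hW : #W ≤ 5)
    (h02 : Disjoint (L 0) (L 2)) (h13 : Disjoint (L 1) (L 3)) :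
    ∃ c, IsListColoring (pathGraph 4) L c ∧ #(univ.image c ∩ W) ≤ 2 := by
  obtain ⟨hL0, hL1, hL2, hL3⟩ := card_le_of_deg_pathGraph_four_add_two_le hL
  have two_outside : ∀ i j, i ≠ j → (L i \ W).Nonempty → (L j \ W).Nonempty →
      2 ≤ #(L i \ W ∪ L j \ W) →
      ∃ c, IsListColoring (pathGraph 4) L c ∧ #(univ.image c ∩ W) ≤ 2 := by
    intro i j hij hi hj hij2
    obtain ⟨p, hp, q, hq, hpq⟩ := exists_mem_mem_ne_of_two_le_card_union hi hj hij2
    rw [mem_sdiff] at hp hq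
    obtain ⟨c, hc, rfl, rfl⟩ := exists_isListColoring_pair (G := pathGraph 4)
      (fun v => by have := hL v; omega) hij hp.1 hq.1 hpq
    exact ⟨c, hc, card_image_inter_le_of_notMem hij hp.2 hq.2⟩
  have two_large : ∀ i j, i ≠ j → 2 ≤ #(L i \ W) → 2 ≤ #(L j \ W) →
      ∃ c, IsListColoring (pathGraph 4) L c ∧ #(univ.image c ∩ W) ≤ 2 := fun i j hij hi hj =>
    two_outside i j hij (card_pos.mp (by omega)) (card_pos.mp (by omega))
      (hi.trans (card_le_card subset_union_left))
  have two_le_of_disjoint : ∀ i j, Disjoint (L i) (L j) → 7 ≤ #(L i) + #(L j) →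
      2 ≤ #(L i \ W ∪ L j \ W) := by
    intro i j hij h7
    rw [← union_sdiff_distrib]
    have := le_card_sdiff W (L i ∪ L j)
    rw [card_union_of_disjoint hij] at this
    omega
  have h02' := two_le_of_disjoint 0 2 h02 (by omega)
  have h13' := two_le_of_disjoint 1 3 h13 (by omega)
  rcases nonempty_and_nonempty_or_two_le_card h02' with ⟨h0, h2⟩ | h0 | h2
  · exact two_outside 0 2 (by decide) h0 h2 h02'
  all_goals rcases nonempty_and_nonempty_or_two_le_card h13' with ⟨h1, h3⟩ | h1 | h3
  all_goals first
    | exact two_outside 1 3 (by decide) h1 h3 h13'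
    | exact two_large 0 1 (by decide) h0 h1
    | exact two_large 0 3 (by decide) h0 h3
    | exact two_large 2 1 (by decide) h2 h1
    | exact two_large 2 3 (by decide) h2 h3

theorem exists_isListColoring_pathGraph_four_card_image_inter_le_two
    (hL : ∀ i, deg (pathGraph 4) i + 2 ≤ #(L i)) (hW : #W ≤ 5) :
    ∃ c, IsListColoring (pathGraph 4) L c ∧ #(univ.image c ∩ W) ≤ 2 := by
  obtain ⟨hL0, hL1, hL2, hL3⟩ := card_le_of_deg_pathGraph_four_add_two_le hL
  by_cases h02 : Disjoint (L 0) (L 2)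
  · by_cases h13 : Disjoint (L 1) (L 3)
    · exact exists_isListColoring_pathGraph_four_of_disjoint hL hW h02 h13
    obtain ⟨a, ha1, ha3⟩ := not_disjoint_iff.mp h13
    obtain ⟨c, hc, hcW⟩ :=
      exists_isListColoring_pathGraph_four_of_mem_inter (L := L ∘ Fin.rev) hL2 hL0 hW ha3 ha1
    refine ⟨c ∘ Fin.rev, hc.comp_rev, ?_⟩
    rwa [← image_image, image_univ_of_surjective Fin.rev_surjective]
  · obtain ⟨a, ha0, ha2⟩ := not_disjoint_iff.mp h02
    exact exists_isListColoring_pathGraph_four_of_mem_inter hL1 hL3 hW ha0 ha2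

end Path

section Triangle

variable {T : Fin 3 → Finset ℕ}

theorem isListColoring_top_fin_three {x y z : ℕ} (hx : x ∈ T 0) (hy : y ∈ T 1) (hz : z ∈ T 2)
    (hxy : x ≠ y) (hxz : x ≠ z) (hyz : y ≠ z) :
    IsListColoring ⊤ T ![x, y, z] := by
  refine ⟨fun i => by fin_cases i <;> assumption, fun u v huv => ?_⟩
  fin_cases u <;> fin_cases v <;> simp_all [eq_comm]

theorem exists_finset_forall_isListColoring_top_sdiff (hT : ∀ i, 5 ≤ #(T i)) :
    ∃ W : Finset ℕ, #W ≤ 5 ∧ ∀ S : Finset ℕ, #S ≤ 4 → #(S ∩ W) ≤ 2 →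
      ∃ f, IsListColoring ⊤ (fun i => T i \ S) f := by
  have hne : ∀ S : Finset ℕ, #S ≤ 4 → ∀ i, (T i \ S).Nonempty := fun S hS i =>
    card_pos.mp ((le_card_sdiff S (T i)).trans_lt' (by have := hT i; omega))
  by_cases h12 : 6 ≤ #(T 1 ∪ T 2)
  · obtain ⟨W, hWT, hW⟩ := exists_subset_card_eq (hT 0)
    refine ⟨W, hW.le, fun S hS hSW => ?_⟩
    have h0 : 3 ≤ #(T 0 \ S) := by
      have := card_le_card (sdiff_subset_sdiff hWT (subset_refl S))
      have := card_sdiff (s := S) (t := W)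
      omega
    have h12' : 2 ≤ #(T 1 \ S ∪ T 2 \ S) := by
      rw [← union_sdiff_distrib]
      have := le_card_sdiff S (T 1 ∪ T 2)
      omega
    obtain ⟨y, hy, z, hz, hyz⟩ :=
      exists_mem_mem_ne_of_two_le_card_union (hne S hS 1) (hne S hS 2) h12'
    obtain ⟨x, hx, hxyz⟩ :=
      exists_mem_notMem_of_card_lt_card (s := {y, z}) (card_le_two.trans_lt h0)
    exact ⟨_, isListColoring_top_fin_three hx hy hz (by grind) (by grind) hyz⟩
  · refine ⟨T 1 ∪ T 2, by omega, fun S hS hSW => ?_⟩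
    have h12' : ∀ i, i = 1 ∨ i = 2 → 3 ≤ #(T i \ S) := by
      rintro i hi
      have := card_le_card (inter_subset_inter_left (s := S) (by grind : T i ⊆ T 1 ∪ T 2))
      grind
    obtain ⟨x, hx, y, hy, hxy⟩ := exists_mem_mem_ne_of_two_le_card_union
      (hne S hS 0) (hne S hS 1)
      ((h12' 1 (.inl rfl)).trans' (by omega) |>.trans (card_le_card subset_union_right))
    obtain ⟨z, hz, hzxy⟩ := exists_mem_notMem_of_card_lt_card (s := {x, y})
      (card_le_two.trans_lt (h12' 2 (.inr rfl)))
    exact ⟨_, isListColoring_top_fin_three hx hy hz hxy (by grind) (by grind)⟩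

end Triangle

theorem isListColoring_join {α β : Type*} {A : SimpleGraph α} {B : SimpleGraph β}
    {L : α ⊕ β → Finset ℕ} {f : α → ℕ} {g : β → ℕ} (hf : IsListColoring A (L ∘ Sum.inl) f)
    (hg : IsListColoring B (L ∘ Sum.inr) g) (hfg : ∀ a b, f a ≠ g b) :
    IsListColoring (join A B) L (Sum.elim f g) := by
  refine ⟨Sum.rec hf.1 hg.1, ?_⟩
  rintro (a | b) (a' | b') h
  · exact hf.2 a a' h
  · exact hfg a b'
  · exact (hfg a' b).symm
  · exact hg.2 b b' h

/-- `K_3 * P_4` is `d_1`-choosable. -/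
theorem stmt16 (L : Fin 3 ⊕ Fin 4 → Finset ℕ)
    (hL : ∀ v, deg (join (⊤ : SimpleGraph (Fin 3)) (SimpleGraph.pathGraph 4)) v - 1
      ≤ (L v).card) :
    ∃ c : Fin 3 ⊕ Fin 4 → ℕ, (∀ v, c v ∈ L v) ∧
      ∀ u v, (join (⊤ : SimpleGraph (Fin 3)) (SimpleGraph.pathGraph 4)).Adj u v →
        c u ≠ c v := by
  have htriangle : ∀ i, 5 ≤ #(L (Sum.inl i)) := fun i => by
    simpa [deg_join_inl, deg_top] using hL (Sum.inl i)
  have hpath : ∀ i, deg (pathGraph 4) i + 2 ≤ #(L (Sum.inr i)) := fun i => by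
    have := hL (Sum.inr i)
    simp only [deg_join_inr, Nat.card_eq_fintype_card, Fintype.card_fin] at this
    omega
  obtain ⟨W, hW, hcomplete⟩ := exists_finset_forall_isListColoring_top_sdiff htriangle
  obtain ⟨c, hc, hcW⟩ := exists_isListColoring_pathGraph_four_card_image_inter_le_two hpath hW
  obtain ⟨f, hf⟩ := hcomplete (univ.image c) (card_image_le.trans_eq (card_fin 4)) hcW
  refine ⟨_, isListColoring_join ⟨fun i => (mem_sdiff.mp (hf.1 i)).1, hf.2⟩ hc fun i j hij => ?_⟩
  exact (mem_sdiff.mp (hf.1 i)).2 (hij ▸ mem_image_of_mem c (mem_univ j))
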